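/- Let R be a finite commutative ring with identity whose set of nonzero zero-divisors is the disjoint union of two nonempty sets U and V such that for all nonzero zero-divisors x, y (including x = y), xy = 0 if and only if x and y lie in different parts (i.e., Γ(R) is a complete bipartite graph with parts U and V and no zero-divisor squares to zero). Then all elements of U have one common annihilator, all elements of V have another common annihilator, these two annihilators are distinct, Γ_E(R) is isomorphic to K_{1,1} (a single edge on two vertices), and Ddim(Γ_E(R)) = 1. -/

import Mathlib

open SimpleGraph

/-- `Zstar R` is the set of nonzero zero-divisors of the commutative ring `R`. -/
def Zstar (R : Type*) [CommRing R] : Set R :=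
  {x : R | x ≠ 0 ∧ ∃ y : R, y ≠ 0 ∧ x * y = 0}

/-- `annSet R x` is the annihilator of `x`, i.e. `{y : R | x * y = 0}`. -/
def annSet (R : Type*) [CommRing R] (x : R) : Set R :=
  {y : R | x * y = 0}

/-- Two nonzero zero-divisors are equivalent iff they have the same annihilator. -/
instance zdvSetoid (R : Type*) [CommRing R] : Setoid (Zstar R) :=
  ⟨fun a b => annSet R a.1 = annSet R b.1, ⟨fun _ => rfl, Eq.symm, Eq.trans⟩⟩

/-- The vertices of the compressed zero-divisor graph `Γ_E(R)`: equivalence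
classes `[x]` of nonzero zero-divisors under equality of annihilators. -/
abbrev CZDVertex (R : Type*) [CommRing R] : Type _ :=
  Quotient (zdvSetoid R)

/-- The compressed zero-divisor graph `Γ_E(R)`: distinct classes `[x]` and `[y]`
are adjacent iff `x * y = 0` (which is independent of the chosen representatives). -/
def CZDG (R : Type*) [CommRing R] : SimpleGraph (CZDVertex R) where
  Adj u v := u ≠ v ∧ ∃ a b : Zstar R,
    (⟦a⟧ : CZDVertex R) = u ∧ (⟦b⟧ : CZDVertex R) = v ∧ (a : R) * b = 0
  symm := by
    constructor
    rintro u v ⟨huv, a, b, ha, hb, hab⟩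
    exact ⟨huv.symm, b, a, hb, ha, by rwa [mul_comm]⟩
  loopless := by
    constructor
    rintro u ⟨h, -⟩
    exact h rfl

/-- A set `W` of vertices is resolving if any two distinct vertices have
different distance to some vertex of `W`. -/
def IsResolving {V : Type*} (G : SimpleGraph V) (W : Set V) : Prop :=
  ∀ u v : V, u ≠ v → ∃ w ∈ W, G.dist u w ≠ G.dist v w

/-- A set `W` of vertices is dominating if every vertex outside `W` is adjacent
to some vertex of `W`. -/
def IsDominating {V : Type*} (G : SimpleGraph V) (W : Set V) : Prop :=
  ∀ v : V, v ∉ W → ∃ w ∈ W, G.Adj v w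

/-- The dominant metric dimension `Ddim G`: the minimum cardinality of a set of
vertices that is simultaneously resolving and dominating, with the convention
that it is `0` for a graph with exactly one vertex. -/
noncomputable def Ddim {V : Type*} (G : SimpleGraph V) : ℕ∞ :=
  if Nat.card V = 1 then 0
  else sInf {n : ℕ∞ | ∃ W : Set V, IsResolving G W ∧ IsDominating G W ∧ W.encard = n}

/-! Every `u ∈ U` has annihilator `V ∪ {0}` and every `v ∈ V` has annihilator `U ∪ {0}`, while
elements of different parts have different annihilators because no nonzero zero-divisor squares
to zero. Hence `Γ_E(R)` has exactly two vertices, which are adjacent, and either of them alone is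
a resolving dominating set. -/

theorem Ddim_le_encard {V : Type*} {G : SimpleGraph V} {W : Set V}
    (hres : IsResolving G W) (hdom : IsDominating G W) : Ddim G ≤ W.encard := by
  unfold Ddim
  split_ifs
  · exact zero_le
  · exact sInf_le ⟨W, hres, hdom, rfl⟩

theorem IsResolving.nonempty {V : Type*} [Nontrivial V] {G : SimpleGraph V} {W : Set V}
    (h : IsResolving G W) : W.Nonempty := by
  obtain ⟨u, v, huv⟩ := exists_pair_ne V
  obtain ⟨w, hw, -⟩ := h u v huv
  exact ⟨w, hw⟩

theorem one_le_Ddim {V : Type*} [Nontrivial V] (G : SimpleGraph V) : 1 ≤ Ddim G := by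
  rw [Ddim, if_neg (by simp [Nat.card_eq_one_iff_unique, not_subsingleton])]
  refine le_sInf ?_
  rintro n ⟨W, hres, -, rfl⟩
  exact Set.one_le_encard_iff_nonempty.2 hres.nonempty

theorem Ddim_top_of_card_eq_two {V : Type*} (h : Nat.card V = 2) :
    Ddim (⊤ : SimpleGraph V) = 1 := by
  obtain ⟨a, b, hab, hall⟩ := Nat.card_eq_two_iff.1 h
  have : Nontrivial V := ⟨⟨a, b, hab⟩⟩
  have h_or : ∀ v, v = a ∨ v = b := fun v => by
    simpa using (hall ▸ Set.mem_univ v : v ∈ ({a, b} : Set V))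
  have hdist : ∀ v ≠ a, (⊤ : SimpleGraph V).dist v a = 1 := fun _ hv =>
    dist_eq_one_iff_adj.2 hv
  have hres : IsResolving ⊤ {a} := by
    refine fun u v huv => ⟨a, rfl, ?_⟩
    rcases h_or u with rfl | rfl <;> rcases h_or v with rfl | rfl
    · exact absurd rfl huv
    · simp [hdist v hab.symm]
    · simp [hdist u hab.symm]
    · exact absurd rfl huv
  have hdom : IsDominating ⊤ {a} := fun v hv => ⟨a, rfl, hv⟩
  exact le_antisymm (by simpa using Ddim_le_encard hres hdom) (one_le_Ddim _)

/-- `Γ(R)` is complete bipartite with parts `U` and `V`, and no nonzero zero-divisor squares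
to zero. -/
structure IsZeroDivisorBipartition (R : Type*) [CommRing R] (U V : Set R) : Prop where
  zstar_eq : Zstar R = U ∪ V
  disjoint : Disjoint U V
  mul_eq_zero_iff : ∀ x ∈ Zstar R, ∀ y ∈ Zstar R,
    (x * y = 0 ↔ (x ∈ U ∧ y ∈ V) ∨ (x ∈ V ∧ y ∈ U))

namespace IsZeroDivisorBipartition

variable {R : Type*} [CommRing R] {U V : Set R}

theorem symm (h : IsZeroDivisorBipartition R U V) : IsZeroDivisorBipartition R V U where
  zstar_eq := h.zstar_eq.trans (Set.union_comm U V)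
  disjoint := h.disjoint.symm
  mul_eq_zero_iff x hx y hy := (h.mul_eq_zero_iff x hx y hy).trans or_comm

theorem left_subset (h : IsZeroDivisorBipartition R U V) : U ⊆ Zstar R :=
  h.zstar_eq ▸ Set.subset_union_left

theorem right_subset (h : IsZeroDivisorBipartition R U V) : V ⊆ Zstar R :=
  h.symm.left_subset

theorem mem_right_of_not_mem_left (h : IsZeroDivisorBipartition R U V) {x : R}
    (hx : x ∈ Zstar R) (hxU : x ∉ U) : x ∈ V :=
  (h.zstar_eq ▸ hx : x ∈ U ∪ V).resolve_left hxU

theorem mul_self_ne_zero (h : IsZeroDivisorBipartition R U V) {x : R} (hx : x ∈ Zstar R) :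
    x * x ≠ 0 := by
  intro hxx
  rcases (h.mul_eq_zero_iff x hx x hx).1 hxx with ⟨hU, hV⟩ | ⟨hV, hU⟩ <;>
    exact Set.disjoint_left.1 h.disjoint hU hV

theorem annSet_eq_of_mem_left (h : IsZeroDivisorBipartition R U V) {u : R} (hu : u ∈ U) :
    annSet R u = V ∪ {0} := by
  have huZ := h.left_subset hu
  ext y
  simp only [annSet, Set.mem_ofPred_eq, Set.mem_union, Set.mem_singleton_iff]
  constructor
  · intro huy
    by_cases hy : y = 0
    · exact Or.inr hy
    have hyZ : y ∈ Zstar R := ⟨hy, u, huZ.1, by rwa [mul_comm]⟩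
    rcases (h.mul_eq_zero_iff u huZ y hyZ).1 huy with ⟨-, hyV⟩ | ⟨huV, -⟩
    · exact Or.inl hyV
    · exact absurd huV (Set.disjoint_left.1 h.disjoint hu)
  · rintro (hyV | rfl)
    · exact (h.mul_eq_zero_iff u huZ y (h.right_subset hyV)).2 (Or.inl ⟨hu, hyV⟩)
    · exact mul_zero u

theorem annSet_eq_of_mem_right (h : IsZeroDivisorBipartition R U V) {v : R} (hv : v ∈ V) :
    annSet R v = U ∪ {0} :=
  h.symm.annSet_eq_of_mem_left hv

theorem union_zero_ne (h : IsZeroDivisorBipartition R U V) (hU : U.Nonempty) :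
    V ∪ {0} ≠ U ∪ {0} := by
  obtain ⟨u, hu⟩ := hU
  intro hVU
  have : u ∈ V ∪ {0} := hVU ▸ Or.inl hu
  rcases this with huV | hu0
  · exact Set.disjoint_left.1 h.disjoint hu huV
  · exact (h.left_subset hu).1 hu0

/-- `y ∈ ann(x) = ann(y)` would give `y² = 0`. -/
theorem mem_left_of_annSet_eq (h : IsZeroDivisorBipartition R U V) {x y : R}
    (hxZ : x ∈ Zstar R) (hyZ : y ∈ Zstar R) (hxy : annSet R x = annSet R y) (hx : x ∈ U) :
    y ∈ U := by
  by_contra hy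
  have hyx : y ∈ annSet R x :=
    (h.mul_eq_zero_iff x hxZ y hyZ).2 (Or.inl ⟨hx, h.mem_right_of_not_mem_left hyZ hy⟩)
  rw [hxy] at hyx
  exact h.mul_self_ne_zero hyZ hyx

theorem mk_eq_mk_iff (h : IsZeroDivisorBipartition R U V) (a b : Zstar R) :
    (⟦a⟧ : CZDVertex R) = ⟦b⟧ ↔ ((a : R) ∈ U ↔ (b : R) ∈ U) := by
  constructor
  · intro hab
    have hann : annSet R a = annSet R b := Quotient.exact hab
    exact ⟨h.mem_left_of_annSet_eq a.2 b.2 hann, h.mem_left_of_annSet_eq b.2 a.2 hann.symm⟩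
  · intro hab
    refine Quotient.sound (show annSet R a = annSet R b from ?_)
    by_cases ha : (a : R) ∈ U
    · rw [h.annSet_eq_of_mem_left ha, h.annSet_eq_of_mem_left (hab.1 ha)]
    · rw [h.annSet_eq_of_mem_right (h.mem_right_of_not_mem_left a.2 ha),
        h.annSet_eq_of_mem_right (h.mem_right_of_not_mem_left b.2 (mt hab.2 ha))]

theorem czdg_eq_top (h : IsZeroDivisorBipartition R U V) : CZDG R = ⊤ := by
  ext p q
  refine ⟨fun hpq => hpq.1, fun hpq => ⟨hpq, ?_⟩⟩
  induction p using Quotient.inductionOn with | h a => ?_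
  induction q using Quotient.inductionOn with | h b => ?_
  refine ⟨a, b, rfl, rfl, (h.mul_eq_zero_iff _ a.2 _ b.2).2 ?_⟩
  rw [top_adj, Ne, h.mk_eq_mk_iff] at hpq
  by_cases ha : (a : R) ∈ U
  · exact Or.inl ⟨ha, h.mem_right_of_not_mem_left b.2 fun hb => hpq (iff_of_true ha hb)⟩
  · exact Or.inr ⟨h.mem_right_of_not_mem_left a.2 ha,
      by_contra fun hb => hpq (iff_of_false ha hb)⟩

noncomputable def vertexEquivProp (h : IsZeroDivisorBipartition R U V) (hU : U.Nonempty)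
    (hV : V.Nonempty) : CZDVertex R ≃ Prop :=
  Equiv.ofBijective (Quotient.lift (fun a : Zstar R => (a : R) ∈ U)
      fun a b hab => propext ((h.mk_eq_mk_iff a b).1 (Quotient.sound hab))) <| by
    refine ⟨fun p q => Quotient.inductionOn₂ p q fun a b hab =>
      (h.mk_eq_mk_iff a b).2 (Eq.to_iff hab), fun P => ?_⟩
    obtain ⟨u, hu⟩ := hU
    obtain ⟨v, hv⟩ := hV
    by_cases hP : P
    · exact ⟨⟦⟨u, h.left_subset hu⟩⟧, (eq_true hu).trans (eq_true hP).symm⟩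
    · exact ⟨⟦⟨v, h.right_subset hv⟩⟧,
        (eq_false fun hvU => Set.disjoint_left.1 h.disjoint hvU hv).trans (eq_false hP).symm⟩

end IsZeroDivisorBipartition

theorem stmt_3_general (R : Type*) [CommRing R] (U V : Set R)
    (hUV : Zstar R = U ∪ V) (hdisj : Disjoint U V)
    (hU : U.Nonempty) (hV : V.Nonempty)
    (hadj : ∀ x ∈ Zstar R, ∀ y ∈ Zstar R,
      (x * y = 0 ↔ (x ∈ U ∧ y ∈ V) ∨ (x ∈ V ∧ y ∈ U))) :
    (∃ A B : Set R, (∀ u ∈ U, annSet R u = A) ∧ (∀ v ∈ V, annSet R v = B) ∧ A ≠ B) ∧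
    Nonempty (CZDG R ≃g (⊤ : SimpleGraph (Fin 2))) ∧
    Ddim (CZDG R) = 1 := by
  have h : IsZeroDivisorBipartition R U V := ⟨hUV, hdisj, hadj⟩
  have e := h.vertexEquivProp hU hV
  refine ⟨⟨V ∪ {0}, U ∪ {0}, fun _ => h.annSet_eq_of_mem_left,
    fun _ => h.annSet_eq_of_mem_right, h.union_zero_ne hU⟩, ?_, ?_⟩
  · rw [h.czdg_eq_top]
    exact ⟨Iso.completeGraph (e.trans (Equiv.propEquivBool.trans finTwoEquiv.symm))⟩
  · rw [h.czdg_eq_top, Ddim_top_of_card_eq_two (by simp [Nat.card_congr e])]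

/-- If the nonzero zero-divisors of a finite commutative ring `R`
split as a disjoint union of nonempty sets `U` and `V` such that for all
nonzero zero-divisors `x, y` (including `x = y`) one has `x * y = 0` iff `x`
and `y` lie in different parts, then all elements of `U` share one annihilator,
all elements of `V` share another, the two annihilators are distinct,
`Γ_E(R) ≅ K_{1,1}`, and `Ddim (Γ_E R) = 1`. -/
theorem stmt_3 (R : Type*) [CommRing R] [Finite R] (U V : Set R)
    (hUV : Zstar R = U ∪ V) (hdisj : Disjoint U V)
    (hU : U.Nonempty) (hV : V.Nonempty)
    (hadj : ∀ x ∈ Zstar R, ∀ y ∈ Zstar R,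
      (x * y = 0 ↔ (x ∈ U ∧ y ∈ V) ∨ (x ∈ V ∧ y ∈ U))) :
    (∃ A B : Set R, (∀ u ∈ U, annSet R u = A) ∧ (∀ v ∈ V, annSet R v = B) ∧ A ≠ B) ∧
    Nonempty (CZDG R ≃g (⊤ : SimpleGraph (Fin 2))) ∧
    Ddim (CZDG R) = 1 :=
  stmt_3_general R U V hUV hdisj hU hV hadj
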